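/- arXiv:math/0406446 — 3 statements merged into one kernel-verified Lean document; each statement's English description precedes it below -/
import Mathlib

section
/- Let q ≥ 2 and b ≥ 2 be integers and δ ∈ (0, 1/(q−1)], and let M be the q-state symmetric (Potts) channel with parameter δ, so λ₂(M) = 1 − qδ. If b·|1 − qδ| ≤ 1, then the reconstruction problem for the b-ary tree T_b and M is not solvable: for all i, j, lim_{n→∞} D_V(P_n^i, P_n^j) = 0. -/
open Filter

/-- The distribution of the configuration at level `n` of the `b`-ary tree,
for the broadcast process with channel `M`, given that the root has value `i`.
Vertices at level `n` are encoded as paths `Fin n → Fin b`. -/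
noncomputable def levelDist {A : Type} [Fintype A] [DecidableEq A]
    (M : A → A → ℝ) (b : ℕ) (i : A) : (n : ℕ) → ((Fin n → Fin b) → A) → ℝ
  | 0 => fun σ => if σ = (fun _ => i) then 1 else 0
  | n + 1 => fun τ => ∑ σ : (Fin n → Fin b) → A, levelDist M b i n σ *
      ∏ w : Fin (n + 1) → Fin b, M (σ fun m => w m.castSucc) (τ w)

/-- Total variation distance between two (densities of) probability measures
on a finite set. -/
noncomputable def tvDist {Ω : Type*} [Fintype Ω] (P Q : Ω → ℝ) : ℝ :=
  (1 / 2) * ∑ σ, |P σ - Q σ|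

/-- The `q`-state symmetric (Potts) channel with parameter `δ`. -/
noncomputable def potts (q : ℕ) (δ : ℝ) : Fin q → Fin q → ℝ :=
  fun i j => if i = j then 1 - ((q : ℝ) - 1) * δ else δ

namespace PottsAux

variable {A : Type} [Fintype A] [DecidableEq A]

lemma prod_split {n b : ℕ} (F : (Fin (n + 1) → Fin b) → ℝ) :
    ∏ w : Fin (n + 1) → Fin b, F w
      = ∏ k : Fin b, ∏ v : Fin n → Fin b, F (Fin.cons k v) := by
  rw [← Fintype.prod_prod_type (f := fun p : Fin b × (Fin n → Fin b) => F (Fin.cons p.1 p.2))]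
  exact (Fintype.prod_equiv (Fin.consEquiv fun _ => Fin b) _ _ (fun p => rfl)).symm

def splitEquiv (b n : ℕ) (A : Type) :
    (Fin b → ((Fin n → Fin b) → A)) ≃ ((Fin (n + 1) → Fin b) → A) where
  toFun ρ w := ρ (w 0) (Fin.tail w)
  invFun σ k v := σ (Fin.cons k v)
  left_inv ρ := by funext k v; simp
  right_inv σ := by funext w; simp

lemma sum_split {n b : ℕ} {A : Type} [Fintype A] [DecidableEq A]
    (F : ((Fin (n + 1) → Fin b) → A) → ℝ) :
    ∑ σ : (Fin (n + 1) → Fin b) → A, F σ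
      = ∑ ρ : Fin b → ((Fin n → Fin b) → A), F (fun w => ρ (w 0) (Fin.tail w)) :=
  (Fintype.sum_equiv (splitEquiv b n A) _ _ fun ρ => rfl).symm

lemma cons_comp_castSucc {n b : ℕ} (k : Fin b) (v : Fin (n + 1) → Fin b) :
    (fun m : Fin (n + 1) => (Fin.cons k v : Fin (n + 2) → Fin b) m.castSucc)
      = Fin.cons k (fun m : Fin n => v m.castSucc) := by
  funext m
  refine Fin.cases ?_ (fun m' => ?_) m
  · simp
  · simp [← Fin.succ_castSucc]



lemma levelDist_succ (M : A → A → ℝ) (b : ℕ) :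
    ∀ (n : ℕ) (i : A) (τ : (Fin (n + 1) → Fin b) → A),
    levelDist M b i (n + 1) τ
      = ∏ k : Fin b, ∑ a : A, M i a * levelDist M b a n (fun v => τ (Fin.cons k v)) := by
  intro n
  induction n with
  | zero =>
    intro i τ
    show (∑ σ : (Fin 0 → Fin b) → A, (if σ = fun _ => i then 1 else 0) *
        ∏ w : Fin 1 → Fin b, M (σ fun m => w m.castSucc) (τ w)) = _
    rw [Finset.sum_eq_single (fun _ => i)]
    · rw [if_pos rfl, one_mul]
      have key : ∀ k : Fin b, (fun v : Fin 0 → Fin b => τ (Fin.cons k v))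
          = fun _ => τ (Fin.cons k Fin.elim0) := by
        intro k; funext v
        exact congrArg τ (congrArg _ (Subsingleton.elim v _))
      calc (∏ w : Fin 1 → Fin b, M i (τ w))
          = ∏ k : Fin b, M i (τ (Fin.cons k Fin.elim0)) := by
            refine (Fintype.prod_equiv (Equiv.funUnique (Fin 1) (Fin b)).symm _ _ ?_).symm
            intro k
            refine congrArg (M i) (congrArg τ ?_)
            funext x
            refine Fin.cases ?_ (fun j => j.elim0) x
            simp [Equiv.funUnique]
        _ = _ := by
            refine Finset.prod_congr rfl fun k _ => ?_
            rw [key k]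
            show M i (τ (Fin.cons k Fin.elim0)) = ∑ a : A, M i a *
              (if (fun _ : Fin 0 → Fin b => τ (Fin.cons k Fin.elim0)) = fun _ => a then 1 else 0)
            have hiff : ∀ a : A,
                ((fun _ : Fin 0 → Fin b => τ (Fin.cons k Fin.elim0)) = fun _ => a)
                ↔ τ (Fin.cons k Fin.elim0) = a := by
              intro a
              constructor
              · intro hh; exact congrFun hh Fin.elim0
              · intro hh; funext _; exact hh
            simp only [hiff]
            simp
    · intro σ _ hσ; rw [if_neg hσ, zero_mul]
    · simp
  | succ n ih =>
    intro i τ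
    show (∑ σ : (Fin (n + 1) → Fin b) → A, levelDist M b i (n + 1) σ *
        ∏ w : Fin (n + 2) → Fin b, M (σ fun m => w m.castSucc) (τ w)) = _
    have step1 : ∀ σ : (Fin (n + 1) → Fin b) → A,
        levelDist M b i (n + 1) σ * ∏ w : Fin (n + 2) → Fin b, M (σ fun m => w m.castSucc) (τ w)
        = ∏ k : Fin b,
            ((∑ a : A, M i a * levelDist M b a n (fun v => σ (Fin.cons k v))) *
             ∏ v : Fin (n + 1) → Fin b,
               M ((fun v' => σ (Fin.cons k v')) fun m => v m.castSucc) (τ (Fin.cons k v))) := by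
      intro σ
      rw [ih i σ, prod_split (fun w => M (σ fun m => w m.castSucc) (τ w)),
        ← Finset.prod_mul_distrib]
      refine Finset.prod_congr rfl fun k _ => ?_
      congr 1
      refine Finset.prod_congr rfl fun v _ => ?_
      congr 1
      rw [cons_comp_castSucc]
    simp only [step1]
    rw [sum_split (fun σ => ∏ k : Fin b,
        ((∑ a : A, M i a * levelDist M b a n (fun v => σ (Fin.cons k v))) *
         ∏ v : Fin (n + 1) → Fin b,
           M ((fun v' => σ (Fin.cons k v')) fun m => v m.castSucc) (τ (Fin.cons k v))))]
    simp only [Fin.cons_zero, Fin.tail_cons]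
    have key2 : (∑ x : Fin b → (Fin n → Fin b) → A, ∏ k : Fin b,
          (∑ a : A, M i a * levelDist M b a n (x k)) *
            ∏ v : Fin (n + 1) → Fin b, M (x k fun m => v m.castSucc) (τ (Fin.cons k v)))
        = ∏ k : Fin b, ∑ a : A, M i a * levelDist M b a (n + 1) (fun v => τ (Fin.cons k v)) := by
      have hps := Finset.prod_univ_sum
        (fun _ : Fin b => (Finset.univ : Finset ((Fin n → Fin b) → A)))
        (fun k s => (∑ a : A, M i a * levelDist M b a n s) *
          ∏ v : Fin (n + 1) → Fin b, M (s fun m => v m.castSucc) (τ (Fin.cons k v)))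
      rw [Fintype.piFinset_univ] at hps
      refine Eq.trans hps.symm ?_
      refine Finset.prod_congr rfl fun k _ => ?_
      have swap : (∑ s : (Fin n → Fin b) → A, (∑ a : A, M i a * levelDist M b a n s) *
            ∏ v : Fin (n + 1) → Fin b, M (s fun m => v m.castSucc) (τ (Fin.cons k v)))
          = ∑ a : A, M i a * ∑ s : (Fin n → Fin b) → A, levelDist M b a n s *
            ∏ v : Fin (n + 1) → Fin b, M (s fun m => v m.castSucc) (τ (Fin.cons k v)) := by
        simp only [Finset.sum_mul, ← Finset.mul_sum, mul_assoc]
        rw [Finset.sum_comm]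
        simp only [Finset.mul_sum]
      rw [swap]
      rfl
    exact key2


lemma levelDist_nonneg {M : A → A → ℝ} (hM : ∀ x y, 0 ≤ M x y) (b : ℕ) :
    ∀ (n : ℕ) (i : A) (σ : (Fin n → Fin b) → A), 0 ≤ levelDist M b i n σ := by
  intro n
  induction n with
  | zero => intro i σ; unfold levelDist; positivity
  | succ n ih =>
    intro i τ
    show 0 ≤ ∑ σ : (Fin n → Fin b) → A, levelDist M b i n σ *
      ∏ w : Fin (n + 1) → Fin b, M (σ fun m => w m.castSucc) (τ w)
    refine Finset.sum_nonneg fun σ _ => mul_nonneg (ih i σ) ?_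
    exact Finset.prod_nonneg fun w _ => hM _ _

lemma levelDist_sum_one {M : A → A → ℝ} (hM : ∀ x, ∑ y, M x y = 1) (b : ℕ) :
    ∀ (n : ℕ) (i : A), ∑ σ : (Fin n → Fin b) → A, levelDist M b i n σ = 1 := by
  intro n
  induction n with
  | zero => intro i; simp [levelDist]
  | succ n ih =>
    intro i
    show (∑ τ : (Fin (n + 1) → Fin b) → A, ∑ σ : (Fin n → Fin b) → A,
        levelDist M b i n σ * ∏ w : Fin (n + 1) → Fin b, M (σ fun m => w m.castSucc) (τ w)) = 1
    rw [Finset.sum_comm]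
    have inner : ∀ σ : (Fin n → Fin b) → A,
        (∑ τ : (Fin (n + 1) → Fin b) → A,
          ∏ w : Fin (n + 1) → Fin b, M (σ fun m => w m.castSucc) (τ w)) = 1 := by
      intro σ
      have hps := Finset.prod_univ_sum
        (fun _ : Fin (n + 1) → Fin b => (Finset.univ : Finset A))
        (fun w a => M (σ fun m => w m.castSucc) a)
      rw [Fintype.piFinset_univ] at hps
      rw [← hps]
      simp [hM]
    simp only [← Finset.mul_sum, inner, mul_one]
    exact ih i

lemma tvDist_nonneg {Ω : Type*} [Fintype Ω] (P Q : Ω → ℝ) : 0 ≤ tvDist P Q := by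
  unfold tvDist; positivity

lemma tvDist_self {Ω : Type*} [Fintype Ω] (P : Ω → ℝ) : tvDist P P = 0 := by
  simp [tvDist]

lemma tvDist_eq_one_sub_min {Ω : Type*} [Fintype Ω] {P Q : Ω → ℝ}
    (hP1 : ∑ σ, P σ = 1) (hQ1 : ∑ σ, Q σ = 1) :
    tvDist P Q = 1 - ∑ σ, min (P σ) (Q σ) := by
  have habs : ∀ σ, |P σ - Q σ| = P σ + Q σ - 2 * min (P σ) (Q σ) := by
    intro σ
    rcases le_total (P σ) (Q σ) with hle | hle
    · rw [abs_of_nonpos (by linarith), min_eq_left hle]; ring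
    · rw [abs_of_nonneg (by linarith), min_eq_right hle]; ring
  unfold tvDist
  simp only [habs]
  rw [Finset.sum_sub_distrib, Finset.sum_add_distrib, hP1, hQ1, ← Finset.mul_sum]
  ring

lemma tvDist_le_one {Ω : Type*} [Fintype Ω] {P Q : Ω → ℝ}
    (hP : ∀ σ, 0 ≤ P σ) (hQ : ∀ σ, 0 ≤ Q σ)
    (hP1 : ∑ σ, P σ = 1) (hQ1 : ∑ σ, Q σ = 1) : tvDist P Q ≤ 1 := by
  rw [tvDist_eq_one_sub_min hP1 hQ1]
  have : 0 ≤ ∑ σ, min (P σ) (Q σ) :=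
    Finset.sum_nonneg fun σ _ => le_min (hP σ) (hQ σ)
  linarith

lemma tvDist_comp_equiv {Ω Ω' : Type*} [Fintype Ω] [Fintype Ω'] (e : Ω' ≃ Ω)
    (P Q : Ω → ℝ) : tvDist (fun x => P (e x)) (fun x => Q (e x)) = tvDist P Q := by
  unfold tvDist
  congr 1
  exact Fintype.sum_equiv e _ _ fun x => rfl

lemma tvDist_prod_le {S : Type*} [Fintype S] {b : ℕ} (Q R : Fin b → S → ℝ)
    (hQ : ∀ k s, 0 ≤ Q k s) (hR : ∀ k s, 0 ≤ R k s)
    (hQ1 : ∀ k, ∑ s, Q k s = 1) (hR1 : ∀ k, ∑ s, R k s = 1) :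
    tvDist (fun ρ : Fin b → S => ∏ k, Q k (ρ k)) (fun ρ : Fin b → S => ∏ k, R k (ρ k))
      ≤ 1 - ∏ k, (1 - tvDist (Q k) (R k)) := by
  classical
  have hprod1 : ∀ (T : Fin b → S → ℝ), (∀ k, ∑ s, T k s = 1) →
      ∑ ρ : Fin b → S, ∏ k, T k (ρ k) = 1 := by
    intro T hT
    have hps := Finset.prod_univ_sum (fun _ : Fin b => (Finset.univ : Finset S)) T
    rw [Fintype.piFinset_univ] at hps
    rw [← hps]
    simp [hT]
  rw [tvDist_eq_one_sub_min (hprod1 Q hQ1) (hprod1 R hR1)]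
  have hmin : ∀ k, tvDist (Q k) (R k) = 1 - ∑ s, min (Q k s) (R k s) := fun k =>
    tvDist_eq_one_sub_min (hQ1 k) (hR1 k)
  simp only [hmin, sub_sub_cancel]
  have hps := Finset.prod_univ_sum (fun _ : Fin b => (Finset.univ : Finset S))
    (fun k s => min (Q k s) (R k s))
  rw [Fintype.piFinset_univ] at hps
  rw [hps]
  refine sub_le_sub_left (Finset.sum_le_sum fun ρ _ => ?_) 1
  refine le_min ?_ ?_
  · exact Finset.prod_le_prod (fun k _ => le_min (hQ k _) (hR k _))
      (fun k _ => min_le_left _ _)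
  · exact Finset.prod_le_prod (fun k _ => le_min (hQ k _) (hR k _))
      (fun k _ => min_le_right _ _)


lemma potts_row {q : ℕ} (δ : ℝ) (i : Fin q) : ∑ j, potts q δ i j = 1 := by
  unfold potts
  have key : ∀ j : Fin q, (if i = j then 1 - ((q : ℝ) - 1) * δ else δ)
      = δ + (if i = j then 1 - (q : ℝ) * δ else 0) := by
    intro j; by_cases hj : i = j <;> simp [hj] <;> ring
  simp only [key]
  rw [Finset.sum_add_distrib, Finset.sum_ite_eq]
  simp [Finset.card_univ, mul_comm]

lemma potts_diff {q : ℕ} (δ : ℝ) {i j : Fin q} (hij : i ≠ j) (a : Fin q) :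
    potts q δ i a - potts q δ j a
      = (1 - (q : ℝ) * δ) * ((if a = i then 1 else 0) - if a = j then 1 else 0) := by
  have hji : ¬ j = i := fun hh => hij hh.symm
  unfold potts
  by_cases hai : a = i <;> by_cases haj : a = j
  · exact absurd (hai.symm.trans haj) hij
  · subst hai
    simp [hji, haj]
    try ring
  · subst haj
    simp [hij, hai]
    try ring
  · have h1 : ¬ i = a := fun hh => hai hh.symm
    have h2 : ¬ j = a := fun hh => haj hh.symm
    simp only [if_neg h1, if_neg h2, if_neg hai, if_neg haj]
    ring

lemma potts_mix {q : ℕ} (δ : ℝ) {i j : Fin q} (hij : i ≠ j) (g : Fin q → ℝ) :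
    ∑ a, (potts q δ i a - potts q δ j a) * g a = (1 - (q : ℝ) * δ) * (g i - g j) := by
  have key : ∀ a, (potts q δ i a - potts q δ j a) * g a
      = (1 - (q : ℝ) * δ) *
        ((if a = i then g a else 0) - (if a = j then g a else 0)) := by
    intro a
    rw [potts_diff δ hij a]
    by_cases hai : a = i <;> by_cases haj : a = j
    · exact absurd (hai.symm.trans haj) hij
    · simp only [if_pos hai, if_neg haj]; ring
    · simp only [if_neg hai, if_pos haj]; ring
    · simp only [if_neg hai, if_neg haj]; ring
  simp only [key]
  rw [← Finset.mul_sum, Finset.sum_sub_distrib, Finset.sum_ite_eq', Finset.sum_ite_eq']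
  simp

lemma strict_bern {t : ℝ} (h0 : 0 < t) (h1 : t < 1) :
    ∀ m : ℕ, 2 ≤ m → 1 - (m : ℝ) * t < (1 - t) ^ m := by
  intro m hm
  induction m, hm using Nat.le_induction with
  | base => push_cast; nlinarith [sq_nonneg t]
  | succ m hm ih =>
    have h1t : 0 < 1 - t := by linarith
    have step := mul_lt_mul_of_pos_right ih h1t
    rw [pow_succ]
    push_cast
    nlinarith [step, mul_nonneg (Nat.cast_nonneg m : (0:ℝ) ≤ (m:ℝ)) (sq_nonneg t)]

lemma tendsto_of_rec {b : ℕ} (hb : 2 ≤ b) {p : ℝ} (hp : 0 ≤ p) (hpb : (b : ℝ) * p ≤ 1)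
    (d : ℕ → ℝ) (hd0 : ∀ n, 0 ≤ d n) (hd1 : ∀ n, d n ≤ 1)
    (hrec : ∀ n, d (n + 1) ≤ 1 - (1 - p * d n) ^ b) :
    Tendsto d atTop (nhds 0) := by
  set f : ℝ → ℝ := fun x => 1 - (1 - p * x) ^ b with hf
  set u : ℕ → ℝ := fun n => f^[n] 1 with hu
  have hbR : (2 : ℝ) ≤ (b : ℝ) := by exact_mod_cast hb
  have hp2 : p ≤ 1 / 2 := by nlinarith
  have husucc : ∀ n, u (n + 1) = f (u n) := fun n => Function.iterate_succ_apply' f n 1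
  have hfx : ∀ x : ℝ, 0 ≤ x → x ≤ 1 → 0 ≤ f x ∧ f x ≤ x := by
    intro x hx0 hx1
    have hpx0 : 0 ≤ p * x := mul_nonneg hp hx0
    have hpx1 : p * x ≤ 1 := by nlinarith
    constructor
    · have : (1 - p * x) ^ b ≤ 1 := by
        apply pow_le_one₀ (by linarith) (by linarith)
      simp only [hf]; linarith
    · have h2 : 1 - (b : ℝ) * (p * x) ≤ (1 - p * x) ^ b := by
        have hber := one_add_mul_le_pow (a := -(p * x)) (by linarith) b
        rw [show (1 : ℝ) + -(p * x) = 1 - p * x from by ring] at hber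
        linarith [hber]
      have h3 : (b : ℝ) * p * x ≤ x := by nlinarith
      simp only [hf]; nlinarith
  have hmono : ∀ x y : ℝ, 0 ≤ x → x ≤ y → y ≤ 1 → f x ≤ f y := by
    intro x y hx0 hxy hy1
    have hpy : p * y ≤ 1 := by nlinarith
    have : (1 - p * y) ^ b ≤ (1 - p * x) ^ b := by
      apply pow_le_pow_left₀ (by linarith)
      have : p * x ≤ p * y := mul_le_mul_of_nonneg_left hxy hp
      linarith
    simp only [hf]; linarith
  have hubounds : ∀ n, 0 ≤ u n ∧ u n ≤ 1 := by
    intro n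
    induction n with
    | zero => simp [hu]
    | succ n ih =>
      rw [husucc n]
      obtain ⟨h0', h1'⟩ := hfx (u n) ih.1 ih.2
      exact ⟨h0', h1'.trans ih.2⟩
  have hanti : Antitone u := by
    apply antitone_nat_of_succ_le
    intro n
    rw [husucc n]
    exact (hfx (u n) (hubounds n).1 (hubounds n).2).2
  have hbdd : BddBelow (Set.range u) := ⟨0, fun x ⟨n, hn⟩ => hn ▸ (hubounds n).1⟩
  have htend : Tendsto u atTop (nhds (⨅ n, u n)) := tendsto_atTop_ciInf hanti hbdd
  set L := ⨅ n, u n with hLdef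
  have hL0 : 0 ≤ L := le_ciInf fun n => (hubounds n).1
  have hL1 : L ≤ 1 := (ciInf_le hbdd 0).trans (by simp [hu])
  have hcont : Continuous f := by
    simp only [hf]; fun_prop
  have hfL : f L = L := by
    have h1 : Tendsto (fun n => u (n + 1)) atTop (nhds L) :=
      htend.comp (tendsto_add_atTop_nat 1)
    have h2 : Tendsto (fun n => f (u n)) atTop (nhds (f L)) :=
      (hcont.tendsto L).comp htend
    have h3 : (fun n => u (n + 1)) = fun n => f (u n) := funext husucc
    rw [h3] at h1
    exact tendsto_nhds_unique h2 h1
  have hL : L = 0 := by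
    by_contra hne
    have hLpos : 0 < L := lt_of_le_of_ne hL0 (Ne.symm hne)
    rcases eq_or_lt_of_le hp with hp0 | hppos
    · simp only [hf, ← hp0, zero_mul, sub_zero, one_pow, sub_self] at hfL
      exact hne hfL.symm
    · have ht0 : 0 < p * L := mul_pos hppos hLpos
      have ht1 : p * L < 1 := by nlinarith
      have hsb := strict_bern ht0 ht1 b hb
      have hfL' : f L < (b : ℝ) * (p * L) := by
        simp only [hf]; linarith
      have : (b : ℝ) * (p * L) ≤ L := by nlinarith
      rw [hfL] at hfL'
      linarith
  have hut : Tendsto u atTop (nhds 0) := by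
    rw [hLdef] at hL
    rw [← hL]
    exact htend
  have hcomp : ∀ n, d n ≤ u n := by
    intro n
    induction n with
    | zero => simpa [hu] using hd1 0
    | succ n ih =>
      calc d (n + 1) ≤ 1 - (1 - p * d n) ^ b := hrec n
        _ = f (d n) := rfl
        _ ≤ f (u n) := hmono (d n) (u n) (hd0 n) ih (hubounds n).2
        _ = u (n + 1) := (husucc n).symm
  exact squeeze_zero hd0 hcomp hut


end PottsAux

/-- If `b |1 - qδ| ≤ 1` then the reconstruction problem for the `b`-ary tree and
the `q`-state Potts channel with parameter `δ` is not solvable: for all `i, j`,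
`D_V(P_n^i, P_n^j) → 0`. -/
theorem potts_not_solvable_of_second_eigenvalue_small (q b : ℕ) (hq : 2 ≤ q) (hb : 2 ≤ b)
    (δ : ℝ) (hδ0 : 0 < δ) (hδ1 : δ ≤ 1 / ((q : ℝ) - 1))
    (h : (b : ℝ) * |1 - (q : ℝ) * δ| ≤ 1) :
    ∀ i j : Fin q, Tendsto
      (fun n => tvDist (levelDist (potts q δ) b i n) (levelDist (potts q δ) b j n))
      atTop (nhds 0) := by
  intro i j
  by_cases hij : i = j
  · subst hij
    simp only [PottsAux.tvDist_self]
    exact tendsto_const_nhds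
  · have hq2R : (2 : ℝ) ≤ (q : ℝ) := by exact_mod_cast hq
    have hqR : (1 : ℝ) ≤ (q : ℝ) - 1 := by linarith
    have hδnn : 0 ≤ δ := le_of_lt hδ0
    have hdiag : 0 ≤ 1 - ((q : ℝ) - 1) * δ := by
      have h1 : ((q : ℝ) - 1) * δ ≤ ((q : ℝ) - 1) * (1 / ((q : ℝ) - 1)) :=
        mul_le_mul_of_nonneg_left hδ1 (by linarith)
      rw [mul_one_div, div_self (by linarith : (q : ℝ) - 1 ≠ 0)] at h1
      linarith
    have hMnn : ∀ x y, 0 ≤ potts q δ x y := by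
      intro x y; unfold potts; by_cases hxy : x = y <;> simp [hxy, hδnn, hdiag]
    have hMrow : ∀ x, ∑ y, potts q δ x y = 1 := fun x => PottsAux.potts_row δ x
    set p := |1 - (q : ℝ) * δ| with hp
    have hp0 : 0 ≤ p := abs_nonneg _
    set d : ℕ → ℝ := fun n => tvDist (levelDist (potts q δ) b i n)
      (levelDist (potts q δ) b j n) with hd
    have hd0 : ∀ n, 0 ≤ d n := fun n => PottsAux.tvDist_nonneg _ _
    have hd1 : ∀ n, d n ≤ 1 := fun n => PottsAux.tvDist_le_one
      (fun σ => PottsAux.levelDist_nonneg hMnn b n i σ)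
      (fun σ => PottsAux.levelDist_nonneg hMnn b n j σ)
      (PottsAux.levelDist_sum_one hMrow b n i) (PottsAux.levelDist_sum_one hMrow b n j)
    have hrec : ∀ n, d (n + 1) ≤ 1 - (1 - p * d n) ^ b := by
      intro n
      set Qf : Fin q → ((Fin n → Fin b) → Fin q) → ℝ :=
        fun c s => ∑ a, potts q δ c a * levelDist (potts q δ) b a n s with hQf
      have hQnn : ∀ c s, 0 ≤ Qf c s := fun c s => Finset.sum_nonneg fun a _ =>
        mul_nonneg (hMnn c a) (PottsAux.levelDist_nonneg hMnn b n a s)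
      have hQ1 : ∀ c, ∑ s, Qf c s = 1 := by
        intro c
        simp only [hQf]
        rw [Finset.sum_comm]
        simp only [← Finset.mul_sum, PottsAux.levelDist_sum_one hMrow b n, mul_one]
        exact hMrow c
      have hsplit : ∀ (c : Fin q) (ρ : Fin b → ((Fin n → Fin b) → Fin q)),
          levelDist (potts q δ) b c (n + 1) (PottsAux.splitEquiv b n (Fin q) ρ)
            = ∏ k, Qf c (ρ k) := by
        intro c ρ
        rw [PottsAux.levelDist_succ]
        refine Finset.prod_congr rfl fun k _ => ?_
        have harg : (fun v => (PottsAux.splitEquiv b n (Fin q)) ρ (Fin.cons k v)) = ρ k := by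
          funext v
          simp [PottsAux.splitEquiv]
        rw [harg]
      have heq : d (n + 1) = tvDist
          (fun ρ : Fin b → ((Fin n → Fin b) → Fin q) => ∏ k, Qf i (ρ k))
          (fun ρ : Fin b → ((Fin n → Fin b) → Fin q) => ∏ k, Qf j (ρ k)) := by
        have e1 : d (n + 1) = tvDist (levelDist (potts q δ) b i (n + 1))
            (levelDist (potts q δ) b j (n + 1)) := rfl
        rw [e1, ← PottsAux.tvDist_comp_equiv (PottsAux.splitEquiv b n (Fin q))
          (levelDist (potts q δ) b i (n + 1)) (levelDist (potts q δ) b j (n + 1))]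
        congr 1 <;> funext ρ <;> rw [hsplit]
      have hQd : tvDist (Qf i) (Qf j) = p * d n := by
        have hdiff : ∀ s, Qf i s - Qf j s = (1 - (q : ℝ) * δ) *
            (levelDist (potts q δ) b i n s - levelDist (potts q δ) b j n s) := by
          intro s
          simp only [hQf]
          rw [← Finset.sum_sub_distrib]
          simp only [← sub_mul]
          exact PottsAux.potts_mix δ hij (fun a => levelDist (potts q δ) b a n s)
        have hdn : d n = (1 / 2) * ∑ s, |levelDist (potts q δ) b i n s -
            levelDist (potts q δ) b j n s| := rfl
        show (1 / 2) * ∑ s, |Qf i s - Qf j s| = p * d n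
        simp only [hdiff, abs_mul]
        rw [← Finset.mul_sum, hdn, hp]
        ring
      rw [heq]
      calc tvDist (fun ρ : Fin b → ((Fin n → Fin b) → Fin q) => ∏ k, Qf i (ρ k))
            (fun ρ : Fin b → ((Fin n → Fin b) → Fin q) => ∏ k, Qf j (ρ k))
          ≤ 1 - ∏ _k : Fin b, (1 - tvDist (Qf i) (Qf j)) :=
            PottsAux.tvDist_prod_le (fun _ => Qf i) (fun _ => Qf j)
              (fun _ => hQnn i) (fun _ => hQnn j) (fun _ => hQ1 i) (fun _ => hQ1 j)
        _ = 1 - (1 - p * d n) ^ b := by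
            rw [Finset.prod_const, Finset.card_univ, Fintype.card_fin, hQd]
    exact PottsAux.tendsto_of_rec hb hp0 h d hd0 hd1 hrec
end

section
/- Let q ≥ 3 and b ≥ 2 be integers and δ ∈ (0, 1/(q−1)], and let M be the q-state symmetric (Potts) channel with parameter δ. If b·(1 − qδ)² / (1 − (q−2)δ) ≤ 1, then the reconstruction problem for the b-ary tree T_b and M is not solvable. -/
/-!
Track the Hellinger affinity `H(P, Q) = ∑ √P √Q` between the level-`n` laws `Pⁿᵢ`, `Pⁿⱼ` of two
root values. Given the root, the `b` subtrees of its children are independent, so `Pⁿ⁺¹ᵢ` is the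
`b`-fold product of the law `Aᵢ = ∑ₖ M i k Pⁿₖ` seen below one child, and
`H(Pⁿ⁺¹ᵢ, Pⁿ⁺¹ⱼ) = H(Aᵢ, Aⱼ)ᵇ`. For the Potts channel `Aᵢ = λ Pⁿᵢ + δ ∑ₖ Pⁿₖ` with `λ = 1 - qδ`,
and comparing square roots pointwise gives `1 - H(Aᵢ, Aⱼ) ≤ θ (1 - H(Pⁿᵢ, Pⁿⱼ))` with
`θ = λ² / (1 - (q - 2)δ)`. So `xₙ = 1 - H(Pⁿᵢ, Pⁿⱼ)` satisfies `xₙ₊₁ ≤ 1 - (1 - θ xₙ)ᵇ`, which is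
`< xₙ` by Bernoulli once `bθ ≤ 1` and `b ≥ 2`; hence `xₙ → 0`, and `d_TV(Pⁿᵢ, Pⁿⱼ) ≤ √(2 xₙ) → 0`.
-/

open Filter

open Finset Real

-- `(α + β) u v ≤ s t` because `(α u² + β v²)(β u² + α v²) - ((α + β) u v)² = α β (u² - v²)²`,
-- hence `(α + β)(u + v)² ≤ (s + t)²`; multiply by `(s - t)² (s + t)² = κ² (u - v)² (u + v)²`.
lemma add_mul_sub_sq_le_of_sq_sub_sq_eq {α β κ u v s t : ℝ} (hu : 0 ≤ u) (hv : 0 ≤ v)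
    (hs : 0 ≤ s) (ht : 0 ≤ t) (hα : 0 ≤ α) (hβ : 0 ≤ β)
    (hst : s ^ 2 - t ^ 2 = κ * (u ^ 2 - v ^ 2))
    (hs_ge : α * u ^ 2 + β * v ^ 2 ≤ s ^ 2) (ht_ge : β * u ^ 2 + α * v ^ 2 ≤ t ^ 2) :
    (α + β) * (s - t) ^ 2 ≤ κ ^ 2 * (u - v) ^ 2 := by
  have hcross : (α + β) * (u * v) ≤ s * t := by
    refine le_of_pow_le_pow_left₀ two_ne_zero (mul_nonneg hs ht) ?_
    calc ((α + β) * (u * v)) ^ 2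
        ≤ (α * u ^ 2 + β * v ^ 2) * (β * u ^ 2 + α * v ^ 2) := by
          nlinarith [mul_nonneg (mul_nonneg hα hβ) (sq_nonneg (u ^ 2 - v ^ 2))]
      _ ≤ s ^ 2 * t ^ 2 := mul_le_mul hs_ge ht_ge (by positivity) (sq_nonneg s)
      _ = (s * t) ^ 2 := by ring
  have hsum : (α + β) * (u + v) ^ 2 ≤ (s + t) ^ 2 := by nlinarith
  have hprod : ((s - t) * (s + t)) ^ 2 = κ ^ 2 * (u - v) ^ 2 * (u + v) ^ 2 := by
    linear_combination (s ^ 2 - t ^ 2 + κ * (u ^ 2 - v ^ 2)) * hst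
  rcases (add_nonneg hu hv).eq_or_lt with huv | huv
  · obtain ⟨rfl, rfl⟩ : u = 0 ∧ v = 0 := ⟨by linarith, by linarith⟩
    have hs_eq : s = t := (pow_left_inj₀ hs ht two_ne_zero).mp (by linarith)
    simp [hs_eq]
  · refine le_of_mul_le_mul_right ?_ (pow_pos huv 2)
    calc (α + β) * (s - t) ^ 2 * (u + v) ^ 2
        = (s - t) ^ 2 * ((α + β) * (u + v) ^ 2) := by ring
      _ ≤ (s - t) ^ 2 * (s + t) ^ 2 := mul_le_mul_of_nonneg_left hsum (sq_nonneg _)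
      _ = κ ^ 2 * (u - v) ^ 2 * (u + v) ^ 2 := by rw [← mul_pow, hprod]

section Hellinger

variable {Ω : Type*} [Fintype Ω]

noncomputable def hellingerAffinity (P Q : Ω → ℝ) : ℝ := ∑ σ, √(P σ) * √(Q σ)

lemma hellingerAffinity_nonneg (P Q : Ω → ℝ) : 0 ≤ hellingerAffinity P Q :=
  sum_nonneg fun _ _ => mul_nonneg (sqrt_nonneg _) (sqrt_nonneg _)

lemma sum_sqrt_sub_sqrt_sq {P Q : Ω → ℝ} (hP : 0 ≤ P) (hQ : 0 ≤ Q) :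
    ∑ σ, (√(P σ) - √(Q σ)) ^ 2 = ∑ σ, P σ + ∑ σ, Q σ - 2 * hellingerAffinity P Q := by
  rw [hellingerAffinity, mul_sum, ← sum_add_distrib, ← sum_sub_distrib]
  refine sum_congr rfl fun σ _ => ?_
  rw [sub_sq, sq_sqrt (hP σ), sq_sqrt (hQ σ)]
  ring

lemma hellingerAffinity_le_one {P Q : Ω → ℝ} (hP : 0 ≤ P) (hQ : 0 ≤ Q)
    (hP1 : ∑ σ, P σ = 1) (hQ1 : ∑ σ, Q σ = 1) : hellingerAffinity P Q ≤ 1 := by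
  have h := sum_sqrt_sub_sqrt_sq hP hQ
  have h0 : 0 ≤ ∑ σ, (√(P σ) - √(Q σ)) ^ 2 := sum_nonneg fun _ _ => sq_nonneg _
  linarith

-- Cauchy–Schwarz applied to `|P - Q| = |√P - √Q| (√P + √Q)`.
lemma tvDist_le_sqrt_hellingerAffinity {P Q : Ω → ℝ} (hP : 0 ≤ P) (hQ : 0 ≤ Q)
    (hP1 : ∑ σ, P σ = 1) (hQ1 : ∑ σ, Q σ = 1) :
    tvDist P Q ≤ √(2 * (1 - hellingerAffinity P Q)) := by
  have hfactor : ∀ σ, |√(P σ) - √(Q σ)| * (√(P σ) + √(Q σ)) = |P σ - Q σ| := fun σ => by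
    rw [← abs_of_nonneg (add_nonneg (sqrt_nonneg (P σ)) (sqrt_nonneg (Q σ))), ← abs_mul]
    congr 1
    linear_combination sq_sqrt (hP σ) - sq_sqrt (hQ σ)
  have hplus : ∑ σ, (√(P σ) + √(Q σ)) ^ 2 ≤ 4 := calc
    _ ≤ ∑ σ, 2 * (P σ + Q σ) := sum_le_sum fun σ _ => by
      nlinarith [sq_sqrt (hP σ), sq_sqrt (hQ σ), sq_nonneg (√(P σ) - √(Q σ))]
    _ = 4 := by rw [← mul_sum, sum_add_distrib, hP1, hQ1]; norm_num
  have hCS := sum_mul_sq_le_sq_mul_sq univ (fun σ => |√(P σ) - √(Q σ)|)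
    fun σ => √(P σ) + √(Q σ)
  simp only [hfactor, sq_abs] at hCS
  rw [sum_sqrt_sub_sqrt_sq hP hQ, hP1, hQ1] at hCS
  have ha := hellingerAffinity_le_one hP hQ hP1 hQ1
  refine le_sqrt_of_sq_le ?_
  rw [tvDist]
  nlinarith [mul_le_mul_of_nonneg_left hplus (by linarith : 0 ≤ 1 + 1 - 2 * hellingerAffinity P Q)]

lemma hellingerAffinity_comp_equiv {Ω' : Type*} [Fintype Ω'] (e : Ω ≃ Ω') (P Q : Ω' → ℝ) :
    hellingerAffinity (P ∘ e) (Q ∘ e) = hellingerAffinity P Q :=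
  e.sum_comp fun σ => √(P σ) * √(Q σ)

lemma hellingerAffinity_pi {ι : Type*} [Fintype ι] [DecidableEq ι] {P Q : ι → Ω → ℝ}
    (hP : 0 ≤ P) (hQ : 0 ≤ Q) :
    hellingerAffinity (fun τ : ι → Ω => ∏ c, P c (τ c)) (fun τ => ∏ c, Q c (τ c)) =
      ∏ c, hellingerAffinity (P c) (Q c) := by
  simp only [hellingerAffinity, Fintype.prod_sum]
  refine sum_congr rfl fun τ _ => ?_
  rw [sqrt_prod _ fun c _ => hP c (τ c), sqrt_prod _ fun c _ => hQ c (τ c), prod_mul_distrib]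

lemma sum_sqrt_mix_sub_sqrt_mix_sq_le {κ δ : ℝ} {P Q R : Ω → ℝ} (hP : 0 ≤ P) (hQ : 0 ≤ Q)
    (hR : P + Q ≤ R) (hδ : 0 ≤ δ) (hκδ : 0 ≤ κ + δ) :
    (κ + 2 * δ) * ∑ σ, (√(κ * P σ + δ * R σ) - √(κ * Q σ + δ * R σ)) ^ 2 ≤
      κ ^ 2 * ∑ σ, (√(P σ) - √(Q σ)) ^ 2 := by
  rw [mul_sum, mul_sum]
  refine sum_le_sum fun σ _ => ?_
  have hδR : δ * (P σ + Q σ) ≤ δ * R σ := mul_le_mul_of_nonneg_left (hR σ) hδ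
  have hA : (κ + δ) * P σ + δ * Q σ ≤ κ * P σ + δ * R σ := by linarith
  have hB : δ * P σ + (κ + δ) * Q σ ≤ κ * Q σ + δ * R σ := by linarith
  have hA0 : 0 ≤ κ * P σ + δ * R σ :=
    (add_nonneg (mul_nonneg hκδ (hP σ)) (mul_nonneg hδ (hQ σ))).trans hA
  have hB0 : 0 ≤ κ * Q σ + δ * R σ :=
    (add_nonneg (mul_nonneg hδ (hP σ)) (mul_nonneg hκδ (hQ σ))).trans hB
  have key := add_mul_sub_sq_le_of_sq_sub_sq_eq (κ := κ) (s := √(κ * P σ + δ * R σ))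
    (t := √(κ * Q σ + δ * R σ)) (sqrt_nonneg (P σ)) (sqrt_nonneg (Q σ))
    (sqrt_nonneg _) (sqrt_nonneg _) hκδ hδ
    (by rw [sq_sqrt hA0, sq_sqrt hB0, sq_sqrt (hP σ), sq_sqrt (hQ σ)]; ring)
    (by rwa [sq_sqrt hA0, sq_sqrt (hP σ), sq_sqrt (hQ σ)])
    (by rwa [sq_sqrt hB0, sq_sqrt (hP σ), sq_sqrt (hQ σ)])
  rwa [add_assoc, ← two_mul] at key

end Hellinger

lemma tendsto_zero_of_le_of_lt_self {x : ℕ → ℝ} {g : ℝ → ℝ} (hg : Continuous g)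
    (hg0 : g 0 ≤ 0) (hlt : ∀ y ∈ Set.Ioc (0 : ℝ) 1, g y < y) (hx : ∀ n, x n ∈ Set.Icc (0 : ℝ) 1)
    (hrec : ∀ n, x (n + 1) ≤ g (x n)) : Tendsto x atTop (nhds 0) := by
  have hle : ∀ y ∈ Set.Icc (0 : ℝ) 1, g y ≤ y := fun y hy =>
    hy.1.eq_or_lt.elim (fun h => h ▸ hg0) fun h => (hlt y ⟨h, hy.2⟩).le
  have hanti : Antitone x := antitone_nat_of_succ_le fun n => (hrec n).trans (hle _ (hx n))
  obtain ⟨l, hconv⟩ : ∃ l, Tendsto x atTop (nhds l) :=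
    ⟨_, tendsto_atTop_ciInf hanti ⟨0, by rintro _ ⟨n, rfl⟩; exact (hx n).1⟩⟩
  have hl : l ∈ Set.Icc (0 : ℝ) 1 := isClosed_Icc.mem_of_tendsto hconv (Eventually.of_forall hx)
  have hlg : l ≤ g l := le_of_tendsto_of_tendsto' (hconv.comp (tendsto_add_atTop_nat 1))
    ((hg.tendsto l).comp hconv) hrec
  rcases hl.1.eq_or_lt with hl0 | hl0
  · rwa [← hl0] at hconv
  · exact absurd hlg (hlt l ⟨hl0, hl.2⟩).not_ge

lemma one_sub_pow_one_sub_mul_lt {b : ℕ} {θ y : ℝ} (hb : 2 ≤ b) (hθ : 0 ≤ θ) (hbθ : b * θ ≤ 1)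
    (hy : y ∈ Set.Ioc (0 : ℝ) 1) : 1 - (1 - θ * y) ^ b < y := by
  obtain ⟨hy0, hy1⟩ := hy
  rcases hθ.eq_or_lt with rfl | hθ
  · simpa using hy0
  have hb1 : (1 : ℝ) ≤ b := by exact_mod_cast (by omega : 1 ≤ b)
  have hθ1 : θ * y ≤ 1 := by nlinarith
  have hbern := one_add_mul_self_lt_rpow_one_add (s := -(θ * y)) (by linarith)
    (by have := mul_pos hθ hy0; linarith) (p := b) (by exact_mod_cast hb)
  rw [rpow_natCast, ← sub_eq_add_neg] at hbern
  nlinarith [mul_le_mul_of_nonneg_right hbθ hy0.le]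

section LevelDist

variable {A : Type} [Fintype A] [DecidableEq A] {M : A → A → ℝ} {b : ℕ}

def configEquiv (A : Type) (b n : ℕ) :
    ((Fin (n + 1) → Fin b) → A) ≃ (Fin b → (Fin n → Fin b) → A) where
  toFun τ c v := τ (Fin.cons c v)
  invFun g w := g (w 0) (Fin.tail w)
  left_inv τ := by simp
  right_inv g := by simp

omit [DecidableEq A] in
lemma sum_prod_configEquiv {n : ℕ} (f : Fin b → ((Fin n → Fin b) → A) → ℝ) :
    ∑ τ, ∏ c, f c (configEquiv A b n τ c) = ∏ c, ∑ u, f c u := by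
  rw [Fintype.prod_sum]
  exact (configEquiv A b n).sum_comp fun g => ∏ c, f c (g c)

lemma prod_pi_fin_succ {α β : Type*} [Fintype α] [CommMonoid β] {n : ℕ}
    (F : (Fin (n + 1) → α) → β) : ∏ w, F w = ∏ c, ∏ v, F (Fin.cons c v) := by
  rw [← Fintype.prod_prod_type']
  exact (Fintype.prod_equiv (Fin.consEquiv fun _ => α) _ _ fun _ => rfl).symm

lemma cons_castSucc {β : Type*} {n : ℕ} (c : β) (v : Fin (n + 1) → β) :
    (fun m : Fin (n + 1) => (Fin.cons c v : Fin (n + 2) → β) m.castSucc) =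
      Fin.cons c fun m : Fin n => v m.castSucc := by
  funext m
  cases m using Fin.cases <;> rfl

noncomputable def childLevelDist (M : A → A → ℝ) (b : ℕ) (i : A) (n : ℕ)
    (σ : (Fin n → Fin b) → A) : ℝ :=
  ∑ k, M i k * levelDist M b k n σ

lemma levelDist_succ (M : A → A → ℝ) (b n : ℕ) (i : A) (τ : (Fin (n + 1) → Fin b) → A) :
    levelDist M b i (n + 1) τ = ∏ c, childLevelDist M b i n (configEquiv A b n τ c) := by
  induction n with
  | zero =>
    simp only [levelDist, ite_mul, one_mul, zero_mul, sum_ite_eq', mem_univ, if_true]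
    rw [prod_pi_fin_succ]
    refine prod_congr rfl fun c _ => ?_
    simp [childLevelDist, levelDist, funext_iff, configEquiv, Subsingleton.elim finZeroElim default]
  | succ n ih =>
    rw [levelDist]
    calc ∑ σ, levelDist M b i (n + 1) σ *
          ∏ w : Fin (n + 2) → Fin b, M (σ fun m => w m.castSucc) (τ w)
        = ∑ σ, ∏ c, (childLevelDist M b i n (configEquiv A b n σ c) *
            ∏ v : Fin (n + 1) → Fin b,
              M (configEquiv A b n σ c fun m => v m.castSucc) (configEquiv A b (n + 1) τ c v)) := by
          refine sum_congr rfl fun σ _ => ?_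
          rw [ih, prod_pi_fin_succ, ← prod_mul_distrib]
          simp only [cons_castSucc]
          rfl
      _ = ∏ c, ∑ u, childLevelDist M b i n u *
            ∏ v : Fin (n + 1) → Fin b,
              M (u fun m => v m.castSucc) (configEquiv A b (n + 1) τ c v) :=
          sum_prod_configEquiv fun c u => childLevelDist M b i n u *
            ∏ v : Fin (n + 1) → Fin b,
              M (u fun m => v m.castSucc) (configEquiv A b (n + 1) τ c v)
      _ = ∏ c, childLevelDist M b i (n + 1) (configEquiv A b (n + 1) τ c) := by
          refine prod_congr rfl fun c _ => ?_
          simp only [childLevelDist, levelDist, sum_mul, mul_sum, mul_assoc]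
          exact sum_comm

lemma levelDist_nonneg (hM : ∀ i j, 0 ≤ M i j) (n : ℕ) (i : A) : 0 ≤ levelDist M b i n := by
  induction n with
  | zero => intro σ; unfold levelDist; positivity
  | succ n ih =>
    exact fun τ => sum_nonneg fun σ _ => mul_nonneg (ih σ) (prod_nonneg fun _ _ => hM _ _)

lemma levelDist_sum_one (hM : ∀ i, ∑ j, M i j = 1) (n : ℕ) (i : A) :
    ∑ σ, levelDist M b i n σ = 1 := by
  induction n with
  | zero => simp [levelDist]
  | succ n ih =>
    simp only [levelDist]
    rw [sum_comm]
    simp only [← mul_sum, ← Fintype.prod_sum, hM, prod_const_one, mul_one]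
    exact ih

lemma childLevelDist_nonneg (hM : ∀ i j, 0 ≤ M i j) (n : ℕ) (i : A) :
    0 ≤ childLevelDist M b i n :=
  fun σ => sum_nonneg fun k _ => mul_nonneg (hM i k) (levelDist_nonneg hM n k σ)

lemma childLevelDist_sum_one (hM : ∀ i, ∑ j, M i j = 1) (n : ℕ) (i : A) :
    ∑ σ, childLevelDist M b i n σ = 1 := by
  simp only [childLevelDist]
  rw [sum_comm]
  simp only [← mul_sum, levelDist_sum_one hM, mul_one, hM]

lemma hellingerAffinity_levelDist_succ (hM : ∀ i j, 0 ≤ M i j) (n : ℕ) (i j : A) :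
    hellingerAffinity (levelDist M b i (n + 1)) (levelDist M b j (n + 1)) =
      hellingerAffinity (childLevelDist M b i n) (childLevelDist M b j n) ^ b := by
  have hsplit (k : A) : levelDist M b k (n + 1) =
      (fun g : Fin b → _ => ∏ c, childLevelDist M b k n (g c)) ∘ configEquiv A b n :=
    funext (levelDist_succ M b n k)
  rw [hsplit, hsplit, hellingerAffinity_comp_equiv,
    hellingerAffinity_pi (P := fun _ => childLevelDist M b i n)
      (Q := fun _ => childLevelDist M b j n)
      (fun _ => childLevelDist_nonneg hM n i) (fun _ => childLevelDist_nonneg hM n j),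
    prod_const, card_univ, Fintype.card_fin]

end LevelDist

section Potts

variable {q : ℕ} {δ : ℝ}

lemma potts_eq (i k : Fin q) : potts q δ i k = (if i = k then 1 - q * δ else 0) + δ := by
  unfold potts
  split_ifs <;> ring

lemma potts_nonneg (hδ0 : 0 ≤ δ) (hδ1 : ((q : ℝ) - 1) * δ ≤ 1) (i k : Fin q) :
    0 ≤ potts q δ i k := by
  unfold potts
  split_ifs <;> linarith

lemma potts_sum_one (i : Fin q) : ∑ k, potts q δ i k = 1 := by
  simp [potts_eq, sum_add_distrib]

lemma childLevelDist_potts (b n : ℕ) (i : Fin q) (σ : (Fin n → Fin b) → Fin q) :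
    childLevelDist (potts q δ) b i n σ =
      (1 - q * δ) * levelDist (potts q δ) b i n σ + δ * ∑ k, levelDist (potts q δ) b k n σ := by
  simp [childLevelDist, potts_eq, add_mul, sum_add_distrib, ite_mul, mul_sum]

lemma one_sub_hellingerAffinity_childLevelDist_potts_le (hδ0 : 0 ≤ δ)
    (hδ1 : ((q : ℝ) - 1) * δ ≤ 1) {b : ℕ} {i j : Fin q} (hij : i ≠ j) (n : ℕ) :
    (1 - ((q : ℝ) - 2) * δ) * (1 - hellingerAffinity (childLevelDist (potts q δ) b i n)
        (childLevelDist (potts q δ) b j n)) ≤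
      (1 - q * δ) ^ 2 *
        (1 - hellingerAffinity (levelDist (potts q δ) b i n) (levelDist (potts q δ) b j n)) := by
  have hM0 := potts_nonneg hδ0 hδ1
  have hL0 := levelDist_nonneg (b := b) hM0 n
  have key := sum_sqrt_mix_sub_sqrt_mix_sq_le (κ := 1 - q * δ) (hL0 i) (hL0 j)
    (R := fun σ => ∑ k, levelDist (potts q δ) b k n σ)
    (fun σ => by
      simpa [sum_pair hij] using sum_le_univ_sum_of_nonneg (s := {i, j}) fun k => hL0 k σ)
    hδ0 (by linarith)
  simp only [← childLevelDist_potts] at key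
  rw [sum_sqrt_sub_sqrt_sq (childLevelDist_nonneg hM0 n i) (childLevelDist_nonneg hM0 n j),
    sum_sqrt_sub_sqrt_sq (hL0 i) (hL0 j), childLevelDist_sum_one potts_sum_one,
    childLevelDist_sum_one potts_sum_one, levelDist_sum_one potts_sum_one,
    levelDist_sum_one potts_sum_one] at key
  linear_combination key / 2

lemma tendsto_tvDist_levelDist_potts {b : ℕ} (hb : 2 ≤ b) (hδ0 : 0 < δ)
    (hδ1 : ((q : ℝ) - 1) * δ ≤ 1) (hbδ : b * (1 - q * δ) ^ 2 ≤ 1 - ((q : ℝ) - 2) * δ)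
    {i j : Fin q} (hij : i ≠ j) :
    Tendsto (fun n => tvDist (levelDist (potts q δ) b i n) (levelDist (potts q δ) b j n))
      atTop (nhds 0) := by
  have hs : 0 < 1 - ((q : ℝ) - 2) * δ := by linarith
  set θ := (1 - q * δ) ^ 2 / (1 - ((q : ℝ) - 2) * δ)
  have hθ0 : 0 ≤ θ := by positivity
  have hbθ : b * θ ≤ 1 := by rwa [← mul_div_assoc, div_le_one hs]
  have hθ1 : θ ≤ 1 :=
    (le_mul_of_one_le_left hθ0 (by exact_mod_cast (by omega : 1 ≤ b))).trans hbθ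
  have hM0 := potts_nonneg hδ0.le hδ1
  have hL0 := levelDist_nonneg (b := b) hM0
  have hL1 := levelDist_sum_one (b := b) (potts_sum_one (q := q) (δ := δ))
  set x := fun n =>
    1 - hellingerAffinity (levelDist (potts q δ) b i n) (levelDist (potts q δ) b j n)
  have hx (n : ℕ) : x n ∈ Set.Icc (0 : ℝ) 1 :=
    ⟨sub_nonneg.mpr (hellingerAffinity_le_one (hL0 n i) (hL0 n j) (hL1 n i) (hL1 n j)),
      sub_le_self 1 (hellingerAffinity_nonneg _ _)⟩
  have hrec (n : ℕ) : x (n + 1) ≤ 1 - (1 - θ * x n) ^ b := by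
    have hchild : 1 - θ * x n ≤ hellingerAffinity (childLevelDist (potts q δ) b i n)
        (childLevelDist (potts q δ) b j n) := by
      have := one_sub_hellingerAffinity_childLevelDist_potts_le hδ0.le hδ1 (b := b) hij n
      change _ ≤ _ * x n at this
      rw [div_mul_eq_mul_div, sub_le_comm, le_div_iff₀ hs]
      linarith
    have hθx : θ * x n ≤ 1 := mul_le_one₀ hθ1 (hx n).1 (hx n).2
    simp only [x, hellingerAffinity_levelDist_succ hM0]
    linarith [pow_le_pow_left₀ (by linarith) hchild b]
  have hx0 : Tendsto x atTop (nhds 0) :=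
    tendsto_zero_of_le_of_lt_self (g := fun y => 1 - (1 - θ * y) ^ b) (by fun_prop) (by simp)
      (fun y hy => one_sub_pow_one_sub_mul_lt hb hθ0 hbθ hy) hx hrec
  refine squeeze_zero (fun n => mul_nonneg (by norm_num) (sum_nonneg fun _ _ => abs_nonneg _))
    (fun n => tvDist_le_sqrt_hellingerAffinity (hL0 n i) (hL0 n j) (hL1 n i) (hL1 n j)) ?_
  simpa using (hx0.const_mul 2).sqrt

end Potts

theorem potts_not_solvable_general (q b : ℕ) (hb : 2 ≤ b)
    (δ : ℝ) (hδ0 : 0 < δ) (hδ1 : δ ≤ 1 / ((q : ℝ) - 1))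
    (h : (b : ℝ) * (1 - (q : ℝ) * δ) ^ 2 / (1 - ((q : ℝ) - 2) * δ) ≤ 1) :
    ¬ ∃ i j : Fin q, ∃ L > 0, Tendsto
        (fun n => tvDist (levelDist (potts q δ) b i n) (levelDist (potts q δ) b j n))
        atTop (nhds L) := by
  rintro ⟨i, j, L, hL, hT⟩
  have hqδ : ((q : ℝ) - 1) * δ ≤ 1 := by
    rcases le_or_gt ((q : ℝ) - 1) 0 with hq | hq
    · nlinarith
    · rwa [le_div_iff₀ hq, mul_comm] at hδ1
  have hs : 0 < 1 - ((q : ℝ) - 2) * δ := by linarith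
  have hlim : Tendsto (fun n => tvDist (levelDist (potts q δ) b i n)
      (levelDist (potts q δ) b j n)) atTop (nhds 0) := by
    rcases eq_or_ne i j with rfl | hij
    · simp [tvDist]
    · exact tendsto_tvDist_levelDist_potts hb hδ0 hqδ ((div_le_one hs).mp h) hij
  exact hL.ne' (tendsto_nhds_unique hT hlim)

/-- If `b (1 - qδ)² / (1 - (q-2)δ) ≤ 1` then the reconstruction problem for the
`b`-ary tree and the `q`-state Potts channel with parameter `δ` is not
solvable. -/
theorem potts_not_solvable (q b : ℕ) (hq : 3 ≤ q) (hb : 2 ≤ b)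
    (δ : ℝ) (hδ0 : 0 < δ) (hδ1 : δ ≤ 1 / ((q : ℝ) - 1))
    (h : (b : ℝ) * (1 - (q : ℝ) * δ) ^ 2 / (1 - ((q : ℝ) - 2) * δ) ≤ 1) :
    ¬ ∃ i j : Fin q, ∃ L > 0, Tendsto
        (fun n => tvDist (levelDist (potts q δ) b i n) (levelDist (potts q δ) b j n))
        atTop (nhds L) :=
  potts_not_solvable_general q b hb δ hδ0 hδ1 h
end

section
/- Let M be a channel on a finite alphabet A and define, for each i ∈ A, N(i) = {ℓ ∈ A : M_{i,ℓ} > 0}. Then the following are equivalent: (a) there exists an integer b (in fact any b ≥ |A| works) such that, for the broadcast process on the b-ary tree T_b with the root value chosen uniformly from A, for every i ∈ A and every n ≥ 1 there exists a level-n configuration σ with P[σ_n = σ] > 0 and P[σ_ρ = i | σ_n = σ] = 1; (b) for all i ≠ j in A, N(i) is not a subset of N(j). -/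
open Filter

section Aux

variable {A : Type} [Fintype A] [DecidableEq A] (M : A → A → ℝ)

lemma levelDist_one (b : ℕ) (k : A) (σ : (Fin 1 → Fin b) → A) :
    levelDist M b k 1 σ = ∏ w : Fin 1 → Fin b, M k (σ w) := by
  show (∑ ρ : (Fin 0 → Fin b) → A, levelDist M b k 0 ρ *
      ∏ w : Fin 1 → Fin b, M (ρ fun m => w m.castSucc) (σ w)) = _
  rw [Finset.sum_eq_single (fun _ => k : (Fin 0 → Fin b) → A)]
  · simp [levelDist]
  · intro ρ _ hρ
    simp [levelDist, hρ]
  · intro h; exact absurd (Finset.mem_univ _) h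

/-- The equivalence between pairs (level-`n` vertex, child index) and
level-`n+1` vertices. -/
def snocEquiv (b n : ℕ) : ((Fin n → Fin b) × Fin b) ≃ (Fin (n + 1) → Fin b) where
  toFun p := Fin.snoc p.1 p.2
  invFun w := (fun m => w m.castSucc, w (Fin.last n))
  left_inv p := by simp
  right_inv w := by
    funext m
    induction m using Fin.lastCases with
    | last => simp
    | cast m => simp

lemma prod_edges (b n : ℕ) (σ' σ : (Fin n → Fin b) → A) (F : A → Fin b → A) :
    (∏ w : Fin (n + 1) → Fin b,
        M (σ' fun m => w m.castSucc) (F (σ fun m => w m.castSucc) (w (Fin.last n))))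
      = ∏ v : Fin n → Fin b, ∏ k : Fin b, M (σ' v) (F (σ v) k) := by
  rw [← Equiv.prod_comp (snocEquiv b n), Fintype.prod_prod_type]
  apply Finset.prod_congr rfl
  intro v _
  apply Finset.prod_congr rfl
  intro k _
  have h1 : (fun m : Fin n => (snocEquiv b n (v, k)) m.castSucc) = v := by
    funext m; simp [snocEquiv]
  have h2 : (snocEquiv b n (v, k)) (Fin.last n) = k := by simp [snocEquiv]
  rw [h1, h2]

end Aux

/-- For a channel `M` on a finite alphabet `A`, there exists `b` such that for
the broadcast process on the `b`-ary tree with uniformly chosen root, for every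
`i ∈ A` and every `n ≥ 1` there is a positive-probability level-`n`
configuration from which the root is `i` with (conditional) probability `1`,
if and only if for all `i ≠ j` the support `N(i) = {ℓ : M i ℓ > 0}` is not
contained in `N(j)`. -/
theorem exists_certain_reconstruction_iff_supports {A : Type} [Fintype A] [DecidableEq A]
    (M : A → A → ℝ) (hnn : ∀ i j, 0 ≤ M i j) (hrow : ∀ i, ∑ j, M i j = 1) :
    (∃ b : ℕ, ∀ i : A, ∀ n : ℕ, 1 ≤ n →
      ∃ σ : (Fin n → Fin b) → A,
        0 < (Fintype.card A : ℝ)⁻¹ * ∑ j, levelDist M b j n σ ∧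
        ((Fintype.card A : ℝ)⁻¹ * levelDist M b i n σ) /
            ((Fintype.card A : ℝ)⁻¹ * ∑ j, levelDist M b j n σ) = 1) ↔
    (∀ i j : A, i ≠ j → ¬ ({l : A | 0 < M i l} ⊆ {l : A | 0 < M j l})) := by
  constructor
  · -- forward direction
    rintro ⟨b, hb⟩ i j hij hsub
    obtain ⟨σ, hpos, hone⟩ := hb i 1 le_rfl
    have hc : (0 : ℝ) < (Fintype.card A : ℝ)⁻¹ := by
      have : 0 < Fintype.card A := Fintype.card_pos_iff.mpr ⟨i⟩
      positivity
    have hnum : (Fintype.card A : ℝ)⁻¹ * levelDist M b i 1 σ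
        = (Fintype.card A : ℝ)⁻¹ * ∑ k, levelDist M b k 1 σ :=
      (div_eq_one_iff_eq hpos.ne').mp hone
    have hsum : levelDist M b i 1 σ = ∑ k, levelDist M b k 1 σ :=
      mul_left_cancel₀ hc.ne' hnum
    have hLnn : ∀ k, 0 ≤ levelDist M b k 1 σ := by
      intro k
      rw [levelDist_one]
      exact Finset.prod_nonneg fun w _ => hnn _ _
    have hrest : ∑ k ∈ Finset.univ.erase i, levelDist M b k 1 σ = 0 := by
      have h := Finset.add_sum_erase Finset.univ (fun k => levelDist M b k 1 σ)
        (Finset.mem_univ i)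
      linarith [hsum, h]
    have hLj : levelDist M b j 1 σ = 0 :=
      (Finset.sum_eq_zero_iff_of_nonneg (fun k _ => hLnn k)).mp hrest j
        (Finset.mem_erase.mpr ⟨hij.symm, Finset.mem_univ j⟩)
    have hSpos : 0 < ∑ k, levelDist M b k 1 σ := by nlinarith [hpos, hc]
    have hLi : 0 < levelDist M b i 1 σ := hsum ▸ hSpos
    have hfac : ∀ w : Fin 1 → Fin b, 0 < M i (σ w) := by
      intro w
      rcases lt_or_eq_of_le (hnn i (σ w)) with h | h
      · exact h
      · exfalso
        have : levelDist M b i 1 σ = 0 := by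
          rw [levelDist_one]
          exact Finset.prod_eq_zero (Finset.mem_univ w) h.symm
        exact hLi.ne' this
    have : 0 < levelDist M b j 1 σ := by
      rw [levelDist_one]
      exact Finset.prod_pos fun w _ => hsub (hfac w)
    exact this.ne' hLj
  · -- reverse direction
    intro hsep
    classical
    refine ⟨Fintype.card A, ?_⟩
    set b := Fintype.card A with hbdef
    intro i n hn
    have hc : (0 : ℝ) < (Fintype.card A : ℝ)⁻¹ := by
      have : 0 < Fintype.card A := Fintype.card_pos_iff.mpr ⟨i⟩
      positivity
    -- separating family
    have hexl : ∀ a a' : A, ∃ l : A, 0 < M a l ∧ (a' ≠ a → M a' l = 0) := by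
      intro a a'
      by_cases h : a' = a
      · subst h
        have hEx : ∃ l, 0 < M a' l := by
          by_contra hno
          push_neg at hno
          have hz : ∀ l, M a' l = 0 := fun l => le_antisymm (hno l) (hnn a' l)
          have h1 := hrow a'
          rw [Finset.sum_eq_zero (fun l _ => hz l)] at h1
          norm_num at h1
        obtain ⟨l, hl⟩ := hEx
        exact ⟨l, hl, fun h' => absurd rfl h'⟩
      · obtain ⟨l, hl1, hl2⟩ := Set.not_subset.mp (hsep a a' (fun he => h he.symm))
        refine ⟨l, hl1, fun _ => ?_⟩
        exact le_antisymm (not_lt.mp hl2) (hnn a' l)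
    choose L hL1 hL2 using hexl
    set e : Fin b ≃ A := (Fintype.equivFin A).symm with hedef
    set F : A → Fin b → A := fun a k => L a (e k) with hFdef
    have hF1 : ∀ a k, 0 < M a (F a k) := fun a k => hL1 a (e k)
    have hF2 : ∀ a a' : A, a' ≠ a → M a' (F a (e.symm a')) = 0 := by
      intro a a' h
      show M a' (L a (e (e.symm a'))) = 0
      rw [Equiv.apply_symm_apply]
      exact hL2 a a' h
    have key : ∀ m : ℕ, ∃ σ : (Fin m → Fin b) → A,
        0 < levelDist M b i m σ ∧ ∀ j, j ≠ i → levelDist M b j m σ = 0 := by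
      intro m
      induction m with
      | zero =>
        refine ⟨fun _ => i, ?_, ?_⟩
        · simp [levelDist]
        · intro j hj
          simp only [levelDist]
          rw [if_neg]
          intro hcontra
          have : i = j := congrFun hcontra (fun x => x.elim0)
          exact hj this.symm
      | succ m ih =>
        obtain ⟨σ, hσpos, hσzero⟩ := ih
        set τ : (Fin (m + 1) → Fin b) → A :=
          fun w => F (σ fun m' => w m'.castSucc) (w (Fin.last m)) with hτdef
        have hform : ∀ j : A, levelDist M b j (m + 1) τ
            = levelDist M b j m σ * ∏ v : Fin m → Fin b, ∏ k : Fin b, M (σ v) (F (σ v) k) := by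
          intro j
          show (∑ σ' : (Fin m → Fin b) → A, levelDist M b j m σ' *
              ∏ w : Fin (m + 1) → Fin b, M (σ' fun m' => w m'.castSucc) (τ w)) = _
          rw [Finset.sum_eq_single σ]
          · congr 1
            simp only [hτdef]
            exact prod_edges M b m σ σ F
          · intro σ' _ hne
            have hv : ∃ v0, σ' v0 ≠ σ v0 := by
              by_contra hall
              push_neg at hall
              exact hne (funext hall)
            obtain ⟨v0, hv0⟩ := hv
            have hzero : (∏ w : Fin (m + 1) → Fin b,
                M (σ' fun m' => w m'.castSucc) (τ w)) = 0 := by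
              simp only [hτdef]
              rw [prod_edges M b m σ' σ F]
              apply Finset.prod_eq_zero (Finset.mem_univ v0)
              apply Finset.prod_eq_zero (Finset.mem_univ (e.symm (σ' v0)))
              exact hF2 (σ v0) (σ' v0) hv0
            rw [hzero, mul_zero]
          · intro h; exact absurd (Finset.mem_univ _) h
        have hCpos : 0 < ∏ v : Fin m → Fin b, ∏ k : Fin b, M (σ v) (F (σ v) k) :=
          Finset.prod_pos fun v _ => Finset.prod_pos fun k _ => hF1 _ _
        refine ⟨τ, ?_, ?_⟩
        · rw [hform]; exact mul_pos hσpos hCpos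
        · intro j hj; rw [hform, hσzero j hj, zero_mul]
    obtain ⟨σ, h1, h2⟩ := key n
    have hsumeq : ∑ j, levelDist M b j n σ = levelDist M b i n σ := by
      rw [Finset.sum_eq_single i]
      · intro j _ hj; exact h2 j hj
      · intro h; exact absurd (Finset.mem_univ _) h
    refine ⟨σ, ?_, ?_⟩
    · rw [hsumeq]; exact mul_pos hc h1
    · rw [hsumeq]; exact div_self (mul_pos hc h1).ne'
end
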